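/- Let G = (V,E) be a finite graph. Then ∑_{(A⊔B)⊆E} x^{k(⟨A∪B⟩)} y^{|A|+|B|} (z−1)^{c(⟨B⟩)} = C(G,x,y,z) = ∑_{F⊆E} x^{k(⟨F⟩)} y^{|F|} z^{c(⟨F⟩)}, where the left sum is over all ordered pairs (A,B) of edge subsets of E such that the set of vertices incident to edges of A is disjoint from the set of vertices incident to edges of B. (Equivalently, the covered components polynomial equals the edge elimination polynomial ξ(G,x,y,z) evaluated at z ↦ xyz − xy.) -/

import Mathlib

open MvPolynomial Finset
open scoped Classical

noncomputable section

/-- A finite multigraph: a finite vertex set `verts` in an ambient type `α`, a finite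
edge set `edges` in an index type `β` (so parallel edges are allowed), and an endpoint
map `ends` sending each edge to an unordered pair of vertices (loops are allowed). -/
structure Multigraph (α β : Type) where
  verts : Finset α
  edges : Finset β
  ends : β → Sym2 α
  ends_mem : ∀ f ∈ edges, ∀ v ∈ ends f, v ∈ verts

namespace Multigraph

variable {α β : Type}

/-- The simple graph underlying the spanning subgraph with edge set `A`. -/
def sg (G : Multigraph α β) (A : Finset β) : SimpleGraph α :=
  SimpleGraph.fromEdgeSet {s | ∃ f ∈ A, G.ends f = s}

/-- A connected component of the spanning subgraph `⟨A⟩` is covered if it contains an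
endpoint of an edge of `A`. -/
def covered (G : Multigraph α β) (A : Finset β) (c : (G.sg A).ConnectedComponent) : Prop :=
  ∃ f ∈ A, ∃ v, v ∈ G.ends f ∧ (G.sg A).connectedComponentMk v = c

/-- `c(⟨A⟩)`: the number of covered components of the spanning subgraph `⟨A⟩`. -/
def nCov (G : Multigraph α β) (A : Finset β) : ℕ :=
  Nat.card {c : (G.sg A).ConnectedComponent // G.covered A c}

/-- `k(⟨A⟩)`: the number of connected components of the spanning subgraph `⟨A⟩`,
i.e. the covered components together with the isolated vertices. -/
def nComp (G : Multigraph α β) (A : Finset β) : ℕ :=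
  G.nCov A + (G.verts.filter (fun v => ∀ f ∈ A, v ∉ G.ends f)).card

/-- The covered components polynomial
`C(G,x,y,z) = ∑_{A ⊆ E} x^{k(⟨A⟩)} y^{|A|} z^{c(⟨A⟩)}`, with `x = X 0`, `y = X 1`,
`z = X 2`. -/
def ccp (G : Multigraph α β) : MvPolynomial (Fin 3) ℤ :=
  ∑ A ∈ G.edges.powerset, X 0 ^ G.nComp A * X 1 ^ A.card * X 2 ^ G.nCov A

/-- `G₋ₑ`: deletion of the edge `e`. -/
def delete (G : Multigraph α β) (e : β) : Multigraph α β where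
  verts := G.verts
  edges := G.edges.erase e
  ends := G.ends
  ends_mem := fun f hf => G.ends_mem f (Finset.mem_of_mem_erase hf)

/-- `G/ₑ`: contraction of the edge `e` with endpoints `v₁`, `v₂`:
the edge is removed and `v₂` is merged into `v₁`. -/
def contract (G : Multigraph α β) (e : β) (v₁ v₂ : α) : Multigraph α β where
  verts := insert v₁ (G.verts.erase v₂)
  edges := G.edges.erase e
  ends := fun f => Sym2.map (fun w => if w = v₂ then v₁ else w) (G.ends f)
  ends_mem := by
    intro f hf v hv
    obtain ⟨w, hw, rfl⟩ := Sym2.mem_map.mp hv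
    by_cases h : w = v₂
    · simp [h]
    · simp only [if_neg h]
      exact Finset.mem_insert_of_mem
        (Finset.mem_erase.mpr ⟨h, G.ends_mem f (Finset.mem_of_mem_erase hf) w hw⟩)

/-- `G†ₑ`: extraction of an edge with endpoints `v₁`, `v₂`: the vertices `v₁`, `v₂`
and all edges incident to them (in particular the edge itself) are removed. -/
def extract (G : Multigraph α β) (v₁ v₂ : α) : Multigraph α β where
  verts := (G.verts.erase v₁).erase v₂
  edges := G.edges.filter (fun f => v₁ ∉ G.ends f ∧ v₂ ∉ G.ends f)
  ends := G.ends
  ends_mem := by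
    intro f hf v hv
    rw [Finset.mem_filter] at hf
    refine Finset.mem_erase.mpr ⟨?_, Finset.mem_erase.mpr ⟨?_, G.ends_mem f hf.1 v hv⟩⟩
    · rintro rfl; exact hf.2.2 hv
    · rintro rfl; exact hf.2.1 hv

/-- `G₋ᵥ`: deletion of the vertex `v` together with all incident edges. -/
def deleteVert (G : Multigraph α β) (v : α) : Multigraph α β where
  verts := G.verts.erase v
  edges := G.edges.filter (fun f => v ∉ G.ends f)
  ends := G.ends
  ends_mem := by
    intro f hf w hw
    rw [Finset.mem_filter] at hf
    exact Finset.mem_erase.mpr ⟨by rintro rfl; exact hf.2 hw, G.ends_mem f hf.1 w hw⟩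

/-- Disjoint union of two multigraphs. -/
def disjUnion {α' β' : Type} (G : Multigraph α β) (H : Multigraph α' β') :
    Multigraph (α ⊕ α') (β ⊕ β') where
  verts := G.verts.disjSum H.verts
  edges := G.edges.disjSum H.edges
  ends := Sum.elim (fun f => (G.ends f).map Sum.inl) (fun f => (H.ends f).map Sum.inr)
  ends_mem := by
    intro f hf v hv
    rcases f with f | f
    · simp only [Sum.elim_inl] at hv
      obtain ⟨w, hw, rfl⟩ := Sym2.mem_map.mp hv
      exact Finset.inl_mem_disjSum.mpr
        (G.ends_mem f (Finset.inl_mem_disjSum.mp hf) w hw)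
    · simp only [Sum.elim_inr] at hv
      obtain ⟨w, hw, rfl⟩ := Sym2.mem_map.mp hv
      exact Finset.inr_mem_disjSum.mpr
        (H.ends_mem f (Finset.inr_mem_disjSum.mp hf) w hw)

/-- `K₁`: the one-vertex graph. -/
def K1 : Multigraph Unit Empty where
  verts := Finset.univ
  edges := ∅
  ends := fun f => f.elim
  ends_mem := fun f hf => absurd hf (Finset.notMem_empty f)

end Multigraph

/-!
Group the pairs `(A, B)` by `F = A ∪ B`. For fixed `F`, choosing `B ⊆ F` vertex-disjoint from
`F \ B` amounts to choosing a set `S` of covered components of `⟨F⟩` (those containing the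
edges of `B`), and then `c(⟨B⟩) = |S|`. So the inner sum is
`∑_{S} (z - 1) ^ |S| = z ^ c(⟨F⟩)` by the binomial theorem.
-/

namespace Multigraph

variable {α β : Type} (G : Multigraph α β)

/-- `A` and `B` have no endpoint in common; this is the paper's `A ⊔ B`. -/
def Separated (A B : Finset β) : Prop :=
  ∀ f ∈ A, ∀ g ∈ B, ∀ w : α, ¬(w ∈ G.ends f ∧ w ∈ G.ends g)

def incidentVerts (B : Finset β) : Finset α :=
  B.biUnion fun f => (G.ends f).toFinset

def componentsMet (F B : Finset β) : Finset (G.sg F).ConnectedComponent :=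
  (G.incidentVerts B).image (G.sg F).connectedComponentMk

def edgesInto (F : Finset β) (S : Finset (G.sg F).ConnectedComponent) : Finset β :=
  F.filter fun f => ∃ v ∈ G.ends f, (G.sg F).connectedComponentMk v ∈ S

variable {G}

lemma mem_incidentVerts {B : Finset β} {v : α} :
    v ∈ G.incidentVerts B ↔ ∃ f ∈ B, v ∈ G.ends f := by
  simp [incidentVerts, Sym2.mem_toFinset]

lemma sg_adj {A : Finset β} {v w : α} :
    (G.sg A).Adj v w ↔ (∃ f ∈ A, G.ends f = s(v, w)) ∧ v ≠ w := by
  rw [sg, SimpleGraph.fromEdgeSet_adj]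
  rfl

lemma sg_mono {A B : Finset β} (h : A ⊆ B) : G.sg A ≤ G.sg B :=
  SimpleGraph.fromEdgeSet_mono fun _ ⟨f, hf, he⟩ => ⟨f, h hf, he⟩

lemma reachable_of_mem_ends {F : Finset β} {f : β} (hf : f ∈ F) {v w : α}
    (hv : v ∈ G.ends f) (hw : w ∈ G.ends f) : (G.sg F).Reachable v w := by
  rcases eq_or_ne v w with rfl | hne
  · rfl
  · exact (sg_adj.mpr ⟨⟨f, hf, (Sym2.mem_and_mem_iff hne).mp ⟨hv, hw⟩⟩, hne⟩).reachable

lemma connectedComponentMk_eq_of_mem_ends {F : Finset β} {f : β} (hf : f ∈ F) {v w : α}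
    (hv : v ∈ G.ends f) (hw : w ∈ G.ends f) :
    (G.sg F).connectedComponentMk v = (G.sg F).connectedComponentMk w :=
  SimpleGraph.ConnectedComponent.eq.mpr (reachable_of_mem_ends hf hv hw)

lemma Separated.disjoint {A B : Finset β} (h : G.Separated A B) : Disjoint A B :=
  Finset.disjoint_left.mpr fun f hfA hfB =>
    h f hfA f hfB _ ⟨Sym2.out_fst_mem _, Sym2.out_fst_mem _⟩

lemma Separated.reachable_of_walk {F B : Finset β} (hsep : G.Separated (F \ B) B) {v w : α}
    (p : (G.sg F).Walk v w) (hv : v ∈ G.incidentVerts B) :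
    w ∈ G.incidentVerts B ∧ (G.sg B).Reachable v w := by
  induction p with
  | nil => exact ⟨hv, .rfl⟩
  | @cons a b c hab p ih =>
    obtain ⟨g, hg, hag⟩ := mem_incidentVerts.mp hv
    obtain ⟨⟨f, hfF, hf⟩, hne⟩ := sg_adj.mp hab
    have hfB : f ∈ B := by
      by_contra hfB
      exact hsep f (Finset.mem_sdiff.mpr ⟨hfF, hfB⟩) g hg a ⟨hf ▸ Sym2.mem_mk_left a b, hag⟩
    obtain ⟨hc, hbc⟩ := ih (mem_incidentVerts.mpr ⟨f, hfB, hf ▸ Sym2.mem_mk_right a b⟩)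
    exact ⟨hc, (sg_adj.mpr ⟨⟨f, hfB, hf⟩, hne⟩).reachable.trans hbc⟩

lemma nCov_eq_card_componentsMet_self (B : Finset β) : G.nCov B = #(G.componentsMet B B) := by
  rw [nCov, ← Nat.card_eq_finsetCard]
  refine Nat.card_congr (Equiv.subtypeEquivRight fun c => ?_)
  simp only [covered, componentsMet, Finset.mem_image, mem_incidentVerts]
  grind

lemma componentsMet_eq_image_map {F B : Finset β} (hBF : B ⊆ F) :
    G.componentsMet F B = (G.componentsMet B B).image
      (SimpleGraph.ConnectedComponent.map (SimpleGraph.Hom.ofLE (sg_mono hBF))) := by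
  simp only [componentsMet, Finset.image_image]
  rfl

lemma Separated.nCov_eq_card_componentsMet {F B : Finset β} (hBF : B ⊆ F)
    (hsep : G.Separated (F \ B) B) : G.nCov B = #(G.componentsMet F B) := by
  rw [componentsMet_eq_image_map hBF, Finset.card_image_of_injOn,
    nCov_eq_card_componentsMet_self]
  intro c₁ hc₁ c₂ hc₂ h
  obtain ⟨v₁, hv₁, rfl⟩ := Finset.mem_image.mp hc₁
  obtain ⟨v₂, -, rfl⟩ := Finset.mem_image.mp hc₂
  simp only [SimpleGraph.ConnectedComponent.map_mk] at h
  obtain ⟨p⟩ := SimpleGraph.ConnectedComponent.eq.mp h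
  exact SimpleGraph.ConnectedComponent.eq.mpr (hsep.reachable_of_walk p hv₁).2

lemma componentsMet_subset {F B : Finset β} (hBF : B ⊆ F) :
    G.componentsMet F B ⊆ G.componentsMet F F :=
  Finset.image_subset_image fun _ hv =>
    let ⟨f, hf, hvf⟩ := mem_incidentVerts.mp hv
    mem_incidentVerts.mpr ⟨f, hBF hf, hvf⟩

lemma separated_edgesInto {F : Finset β} (S : Finset (G.sg F).ConnectedComponent) :
    G.Separated (F \ G.edgesInto F S) (G.edgesInto F S) := by
  rintro f hf g hg w ⟨hwf, hwg⟩
  obtain ⟨hfF, hfS⟩ := Finset.mem_sdiff.mp hf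
  obtain ⟨hgF, v, hvg, hvS⟩ := Finset.mem_filter.mp hg
  exact hfS (Finset.mem_filter.mpr
    ⟨hfF, w, hwf, connectedComponentMk_eq_of_mem_ends hgF hwg hvg ▸ hvS⟩)

lemma Separated.edgesInto_componentsMet {F B : Finset β} (hBF : B ⊆ F)
    (hsep : G.Separated (F \ B) B) : G.edgesInto F (G.componentsMet F B) = B := by
  ext f
  simp only [edgesInto, componentsMet, Finset.mem_filter, Finset.mem_image]
  constructor
  · rintro ⟨hfF, v, hvf, u, hu, huv⟩
    obtain ⟨p⟩ := SimpleGraph.ConnectedComponent.eq.mp huv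
    obtain ⟨g, hg, hvg⟩ := mem_incidentVerts.mp (hsep.reachable_of_walk p hu).1
    by_contra hfB
    exact hsep f (Finset.mem_sdiff.mpr ⟨hfF, hfB⟩) g hg v ⟨hvf, hvg⟩
  · intro hfB
    exact ⟨hBF hfB, _, Sym2.out_fst_mem _, _,
      mem_incidentVerts.mpr ⟨f, hfB, Sym2.out_fst_mem _⟩, rfl⟩

lemma componentsMet_edgesInto {F : Finset β} {S : Finset (G.sg F).ConnectedComponent}
    (hS : S ⊆ G.componentsMet F F) : G.componentsMet F (G.edgesInto F S) = S := by
  ext c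
  simp only [componentsMet, edgesInto, Finset.mem_image, mem_incidentVerts, Finset.mem_filter]
  constructor
  · rintro ⟨v, ⟨f, ⟨hfF, u, huf, huS⟩, hvf⟩, rfl⟩
    rwa [connectedComponentMk_eq_of_mem_ends hfF hvf huf]
  · intro hc
    obtain ⟨v, hv, rfl⟩ := Finset.mem_image.mp (hS hc)
    obtain ⟨f, hf, hvf⟩ := mem_incidentVerts.mp hv
    exact ⟨v, ⟨f, ⟨hf, v, hvf, hc⟩, hvf⟩, rfl⟩

lemma sum_pow_nCov_separated {R : Type*} [CommSemiring R] (u : R) (F : Finset β) :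
    ∑ B ∈ F.powerset.filter (fun B => G.Separated (F \ B) B), u ^ G.nCov B
      = (u + 1) ^ G.nCov F := by
  have hF : G.Separated (F \ F) F := by simp [Separated]
  calc ∑ B ∈ F.powerset.filter (fun B => G.Separated (F \ B) B), u ^ G.nCov B
      = ∑ S ∈ (G.componentsMet F F).powerset, u ^ #S := by
        refine Finset.sum_nbij' (G.componentsMet F) (G.edgesInto F) ?_ ?_ ?_ ?_ ?_
        · intro B hB
          simp only [Finset.mem_filter, Finset.mem_powerset] at hB
          exact Finset.mem_powerset.mpr (componentsMet_subset hB.1)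
        · intro S _
          simpa using ⟨Finset.filter_subset _ _, separated_edgesInto S⟩
        · intro B hB
          simp only [Finset.mem_filter, Finset.mem_powerset] at hB
          exact hB.2.edgesInto_componentsMet hB.1
        · intro S hS
          exact componentsMet_edgesInto (Finset.mem_powerset.mp hS)
        · intro B hB
          simp only [Finset.mem_filter, Finset.mem_powerset] at hB
          rw [hB.2.nCov_eq_card_componentsMet hB.1]
    _ = (u + 1) ^ G.nCov F := by
        simpa [hF.nCov_eq_card_componentsMet le_rfl] using
          Finset.sum_pow_mul_eq_add_pow u 1 (G.componentsMet F F)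

lemma sum_separated_pairs {M : Type*} [AddCommMonoid M] (E : Finset β)
    (g : Finset β → Finset β → M) :
    ∑ p ∈ (E.powerset ×ˢ E.powerset).filter (fun p => G.Separated p.1 p.2), g (p.1 ∪ p.2) p.2
      = ∑ F ∈ E.powerset, ∑ B ∈ F.powerset.filter (fun B => G.Separated (F \ B) B), g F B := by
  rw [Finset.sum_sigma']
  refine Finset.sum_nbij' (fun p => ⟨p.1 ∪ p.2, p.2⟩) (fun q => (q.1 \ q.2, q.2))
    ?_ ?_ ?_ ?_ fun _ _ => rfl
  · rintro ⟨A, B⟩ h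
    simp only [Finset.mem_filter, Finset.mem_product, Finset.mem_powerset] at h
    simp only [Finset.mem_sigma, Finset.mem_filter, Finset.mem_powerset,
      Finset.union_sdiff_right, Finset.sdiff_eq_self_of_disjoint h.2.disjoint]
    exact ⟨Finset.union_subset h.1.1 h.1.2, Finset.subset_union_right, h.2⟩
  · rintro ⟨F, B⟩ h
    simp only [Finset.mem_sigma, Finset.mem_filter, Finset.mem_powerset] at h
    simp only [Finset.mem_filter, Finset.mem_product, Finset.mem_powerset]
    exact ⟨⟨Finset.sdiff_subset.trans h.1, h.2.1.trans h.1⟩, h.2.2⟩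
  · rintro ⟨A, B⟩ h
    simp only [Finset.mem_filter] at h
    simp [Finset.union_sdiff_right, Finset.sdiff_eq_self_of_disjoint h.2.disjoint]
  · rintro ⟨F, B⟩ h
    simp only [Finset.mem_sigma, Finset.mem_filter, Finset.mem_powerset] at h
    simp [Finset.sdiff_union_of_subset h.2.1]

end Multigraph

/-- For a finite (multi)graph `G`,
`∑_{(A⊔B)⊆E} x^{k(⟨A∪B⟩)} y^{|A|+|B|} (z−1)^{c(⟨B⟩)} = C(G,x,y,z)
  = ∑_{F⊆E} x^{k(⟨F⟩)} y^{|F|} z^{c(⟨F⟩)}`,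
where the first sum is over ordered pairs `(A,B)` of edge subsets such that the set of
vertices incident to edges of `A` is disjoint from the set of vertices incident to edges
of `B`.  (Equivalently, `C` is the edge elimination polynomial `ξ` at `z ↦ xyz − xy`.) -/
theorem ccp_pair_expansion {α β : Type} (G : Multigraph α β) :
    (∑ p ∈ (G.edges.powerset ×ˢ G.edges.powerset).filter
        (fun p => ∀ f ∈ p.1, ∀ g ∈ p.2, ∀ w : α, ¬(w ∈ G.ends f ∧ w ∈ G.ends g)),
      X 0 ^ G.nComp (p.1 ∪ p.2) * X 1 ^ (p.1.card + p.2.card) * (X 2 - 1) ^ G.nCov p.2)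
      = G.ccp ∧
    G.ccp = ∑ F ∈ G.edges.powerset, X 0 ^ G.nComp F * X 1 ^ F.card * X 2 ^ G.nCov F := by
  refine ⟨?_, rfl⟩
  let term (F B : Finset β) : MvPolynomial (Fin 3) ℤ :=
    X 0 ^ G.nComp F * X 1 ^ #F * (X 2 - 1) ^ G.nCov B
  calc _ = ∑ p ∈ (G.edges.powerset ×ˢ G.edges.powerset).filter
          (fun p => G.Separated p.1 p.2), term (p.1 ∪ p.2) p.2 := by
        refine Finset.sum_congr (Finset.filter_congr fun _ _ => Iff.rfl) fun p hp => ?_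
        simp only [term, Finset.card_union_of_disjoint (Finset.mem_filter.mp hp).2.disjoint]
    _ = ∑ F ∈ G.edges.powerset, ∑ B ∈ F.powerset.filter (fun B => G.Separated (F \ B) B),
          term F B := G.sum_separated_pairs G.edges term
    _ = G.ccp := by
        simp only [term, ← Finset.mul_sum, Multigraph.sum_pow_nCov_separated, sub_add_cancel,
          Multigraph.ccp]
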